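/- arXiv:1503.00753 — 5 statements merged into one kernel-verified Lean document; each statement's English description precedes it below -/
import Mathlib

section
/- Let Π1 be a maximization problem and Π2 a minimization problem, and suppose there exists an exact reduction from Π1 to Π2 whose affine shift μ_{𝓘1} = μ is the same constant for all instances 𝓘1 of Π1. Let c1, s1 be reals with μ > c1 ≥ s1 and set ρ2 := (μ − s1)/(μ − c1). Then from every factor-ρ2 LP relaxation of Π2 of size m one obtains a (c1, s1)-approximate LP relaxation of Π1 of size m; in particular fc₊(Π1, c1, s1) ≤ fc₊(Π2, ρ2). -/
open scoped BigOperators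

structure LPRelax (m : ℕ) (S : Type) (I : Type) (val : I → S → ℝ) where
  d : ℕ
  A : Fin m → Fin d → ℝ
  b : Fin m → ℝ
  sol : S → Fin d → ℝ
  obj : I → ((Fin d → ℝ) →ᵃ[ℝ] ℝ)
  feas : ∀ s (i : Fin m), b i ≤ ∑ j, A i j * sol s j
  objEq : ∀ 𝓘 s, obj 𝓘 (sol s) = val 𝓘 s

def LPRelax.Feasible {m : ℕ} {S I : Type} {val : I → S → ℝ}
    (Rel : LPRelax m S I val) (x : Fin Rel.d → ℝ) : Prop :=
  ∀ i : Fin m, Rel.b i ≤ ∑ j, Rel.A i j * x j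

noncomputable def OPTmax {S I : Type} [Fintype S] [Nonempty S] (val : I → S → ℝ) (𝓘 : I) : ℝ :=
  Finset.univ.sup' Finset.univ_nonempty (val 𝓘)

noncomputable def OPTmin {S I : Type} [Fintype S] [Nonempty S] (cost : I → S → ℝ) (𝓘 : I) : ℝ :=
  Finset.univ.inf' Finset.univ_nonempty (cost 𝓘)

def IsFactorMin {m : ℕ} {S I : Type} [Fintype S] [Nonempty S] (cost : I → S → ℝ)
    (Rel : LPRelax m S I cost) (ρ : ℝ) : Prop :=
  ∀ (𝓘 : I) (x : Fin Rel.d → ℝ), Rel.Feasible x → OPTmin cost 𝓘 ≤ ρ * Rel.obj 𝓘 x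

def IsApproxMax {m : ℕ} {S I : Type} [Fintype S] [Nonempty S] (val : I → S → ℝ)
    (Rel : LPRelax m S I val) (c s : ℝ) : Prop :=
  ∀ 𝓘 : I, OPTmax val 𝓘 ≤ s →
    ∀ x : Fin Rel.d → ℝ, Rel.Feasible x → Rel.obj 𝓘 x ≤ c

/-- Auxiliary: affine map `x ↦ μ - ζ * f x`. -/
noncomputable def affShift {d : ℕ} (μ ζ : ℝ) (f : (Fin d → ℝ) →ᵃ[ℝ] ℝ) :
    (Fin d → ℝ) →ᵃ[ℝ] ℝ where
  toFun x := μ - ζ * f x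
  linear := (-ζ) • f.linear
  map_vadd' p v := by
    have h := f.map_vadd p v
    simp only [vadd_eq_add] at h ⊢
    rw [h]
    simp only [LinearMap.smul_apply, smul_eq_mul]
    ring

/-- Reduction theorem: an exact reduction (with constant affine shift `μ`) from a
maximization problem `Π₁` to a minimization problem `Π₂` turns every factor-`ρ₂`
LP relaxation of `Π₂` of size `m`, where `ρ₂ = (μ - s₁)/(μ - c₁)`, into a
`(c₁, s₁)`-approximate LP relaxation of `Π₁` of size `m`; in particular
`fc₊(Π₁, c₁, s₁) ≤ fc₊(Π₂, ρ₂)`. -/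
theorem lp_reduction_max_to_min
    {S1 S2 I1 I2 : Type} [Fintype S1] [Nonempty S1] [Fintype S2] [Nonempty S2]
    (val : I1 → S1 → ℝ) (cost : I2 → S2 → ℝ)
    (hval : ∀ 𝓘 s, 0 ≤ val 𝓘 s) (hcost : ∀ 𝓘 s, 0 ≤ cost 𝓘 s)
    (gI : I1 → I2) (gS : S1 → S2)
    (μ : ℝ) (ζ : I1 → ℝ) (hζ : ∀ 𝓘, 0 ≤ ζ 𝓘)
    (hred : ∀ 𝓘 s, val 𝓘 s = μ - ζ 𝓘 * cost (gI 𝓘) (gS s))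
    (hexact : ∀ 𝓘, OPTmax val 𝓘 = μ - ζ 𝓘 * OPTmin cost (gI 𝓘))
    (c1 s1 : ℝ) (hc1 : c1 < μ) (hs1 : s1 ≤ c1)
    (m : ℕ) (Rel : LPRelax m S2 I2 cost)
    (hRel : IsFactorMin cost Rel ((μ - s1) / (μ - c1))) :
    ∃ Rel' : LPRelax m S1 I1 val, IsApproxMax val Rel' c1 s1 := by
  refine ⟨⟨Rel.d, Rel.A, Rel.b, fun s => Rel.sol (gS s),
    fun 𝓘 => affShift μ (ζ 𝓘) (Rel.obj (gI 𝓘)),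
    fun s i => Rel.feas (gS s) i, fun 𝓘 s => ?_⟩, ?_⟩
  · simp [affShift, Rel.objEq, hred]
  · intro 𝓘 hOPT x hx
    have hfeas : Rel.Feasible x := hx
    have h1 := hRel (gI 𝓘) x hfeas
    have hμs : 0 < μ - s1 := by linarith
    have hμc : 0 < μ - c1 := by linarith
    have h2 : μ - s1 ≤ ζ 𝓘 * OPTmin cost (gI 𝓘) := by
      have := hexact 𝓘; linarith
    have h3 : ζ 𝓘 * OPTmin cost (gI 𝓘) ≤ ζ 𝓘 * ((μ - s1) / (μ - c1) * Rel.obj (gI 𝓘) x) :=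
      mul_le_mul_of_nonneg_left h1 (hζ 𝓘)
    have h4 : μ - s1 ≤ (μ - s1) / (μ - c1) * (ζ 𝓘 * Rel.obj (gI 𝓘) x) := by
      calc μ - s1 ≤ ζ 𝓘 * ((μ - s1) / (μ - c1) * Rel.obj (gI 𝓘) x) := le_trans h2 h3
        _ = (μ - s1) / (μ - c1) * (ζ 𝓘 * Rel.obj (gI 𝓘) x) := by ring
    have h5 : μ - c1 ≤ ζ 𝓘 * Rel.obj (gI 𝓘) x := by
      have hdiv : (μ - c1) * ((μ - s1) / (μ - c1)) = μ - s1 := by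
        field_simp
      nlinarith [div_pos hμs hμc]
    show μ - ζ 𝓘 * Rel.obj (gI 𝓘) x ≤ c1
    linarith
end

section
/- Let G be a graph on n vertices and let I_1,…,I_k be a greedy coloring of G: I_1 is a maximum-size independent set of G, and for each j ≥ 1, I_{j+1} is a maximum-size independent set of the graph G − (I_1 ∪ ⋯ ∪ I_j), with I_1 ∪ ⋯ ∪ I_k = V(G). Then every independent set I of G has a nonempty intersection with at most ⌊2√n⌋ of the color classes I_1,…,I_k. -/
open scoped BigOperators

/-- `s` is an independent set of `G`: no edge of `G` has both endpoints in `s`. -/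
def IsIndep {V : Type} (G : SimpleGraph V) (s : Finset V) : Prop :=
  ∀ u ∈ s, ∀ v ∈ s, ¬ G.Adj u v

/-- Feige–Jozeph greedy coloring lemma: if `I_1, …, I_k` is a greedy coloring of an
`n`-vertex graph `G` (each `I_j` is a maximum-size independent set of
`G − (I_1 ∪ ⋯ ∪ I_{j-1})`, and the classes cover all vertices), then every
independent set of `G` meets at most `⌊2√n⌋` of the color classes. -/
theorem greedy_coloring_lemma (n k : ℕ) (G : SimpleGraph (Fin n))
    (I : Fin k → Finset (Fin n))
    (hindep : ∀ j, IsIndep G (I j))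
    (hdisj : ∀ j : Fin k, ∀ v ∈ I j, ∀ j' : Fin k, j' < j → v ∉ I j')
    (hmax : ∀ j : Fin k, ∀ J : Finset (Fin n), IsIndep G J →
      (∀ v ∈ J, ∀ j' : Fin k, j' < j → v ∉ I j') → J.card ≤ (I j).card)
    (hcover : ∀ v : Fin n, ∃ j, v ∈ I j) :
    ∀ J : Finset (Fin n), IsIndep G J →
      (Finset.univ.filter fun j : Fin k => (J ∩ I j).Nonempty).card ≤
        ⌊2 * Real.sqrt n⌋₊ := by
  classical
  intro J hJ
  set T := Finset.univ.filter (fun j : Fin k => (J ∩ I j).Nonempty) with hT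
  have hTmem : ∀ j, j ∈ T ↔ (J ∩ I j).Nonempty := by
    intro j; simp [hT]
  set t := T.card with ht
  -- classes are pairwise disjoint
  have hdisj' : ∀ v : Fin n, ∀ j j' : Fin k, v ∈ I j → v ∈ I j' → j = j' := by
    intro v j j' h h'
    by_contra hne
    rcases lt_or_gt_of_ne hne with h1 | h1
    · exact hdisj j' v h' j h1 h
    · exact hdisj j v h j' h1 h'
  rcases eq_or_ne t 0 with ht0 | ht0
  · exact le_of_eq_of_le ht0 (Nat.zero_le _)
  -- T nonempty, so we can pick witnesses
  have hTne : T.Nonempty := Finset.card_pos.1 (Nat.pos_of_ne_zero ht0)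
  obtain ⟨j0, hj0⟩ := hTne
  obtain ⟨v0, hv0⟩ := (hTmem j0).1 hj0
  -- witness choice
  have hwit : ∀ j : Fin k, j ∈ T → ∃ v, v ∈ J ∩ I j := fun j hj => (hTmem j).1 hj
  set w : Fin k → Fin n := fun j =>
    if h : (J ∩ I j).Nonempty then h.choose else v0 with hw
  have hwmem : ∀ j ∈ T, w j ∈ J ∩ I j := by
    intro j hj
    have h := (hTmem j).1 hj
    simp only [hw, dif_pos h]
    exact h.choose_spec
  -- key: the j-th class met is at least as big as the number of met classes ≥ j
  set F : Fin k → ℕ := fun j => (T.filter (fun j' => j ≤ j')).card with hF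
  have key : ∀ j ∈ T, F j ≤ (I j).card := by
    intro j hj
    set W := J.filter (fun v => ∀ j' : Fin k, j' < j → v ∉ I j') with hWdef
    have hWindep : IsIndep G W := fun u hu v hv =>
      hJ u (Finset.mem_filter.1 hu).1 v (Finset.mem_filter.1 hv).1
    have hWcard : W.card ≤ (I j).card :=
      hmax j W hWindep (fun v hv => (Finset.mem_filter.1 hv).2)
    refine le_trans ?_ hWcard
    have hinj : Set.InjOn w (T.filter (fun j' => j ≤ j')) := by
      intro a ha b hb hab
      have ha' := hwmem a (Finset.mem_of_mem_filter a ha)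
      have hb' := hwmem b (Finset.mem_of_mem_filter b hb)
      exact hdisj' (w a) a b (Finset.mem_inter.1 ha').2
        (hab ▸ (Finset.mem_inter.1 hb').2)
    have hsub : (T.filter (fun j' => j ≤ j')).image w ⊆ W := by
      intro v hv
      obtain ⟨j', hj', rfl⟩ := Finset.mem_image.1 hv
      obtain ⟨hj'T, hjle⟩ := Finset.mem_filter.1 hj'
      have hm := Finset.mem_inter.1 (hwmem j' hj'T)
      refine Finset.mem_filter.2 ⟨hm.1, ?_⟩
      intro j'' hlt hmem
      have := hdisj' (w j') j'' j' hmem hm.2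
      exact absurd (this ▸ hlt) (not_lt_of_ge hjle)
    calc F j = ((T.filter (fun j' => j ≤ j')).image w).card :=
          (Finset.card_image_of_injOn hinj).symm
      _ ≤ W.card := Finset.card_le_card hsub
  -- the met classes are disjoint, total ≤ n
  have hsum : ∑ j ∈ T, (I j).card ≤ n := by
    rw [← Finset.card_biUnion (fun a _ b _ hab =>
      Finset.disjoint_left.2 (fun v hva hvb => hab (hdisj' v a b hva hvb)))]
    calc (T.biUnion I).card ≤ (Finset.univ : Finset (Fin n)).card :=
          Finset.card_le_card (Finset.subset_univ _)
      _ = n := by simp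
  have hsumF : ∑ j ∈ T, F j ≤ n := le_trans (Finset.sum_le_sum key) hsum
  -- F is injective on T with image exactly Icc 1 t
  have hFanti : ∀ a ∈ T, ∀ b ∈ T, a < b → F b < F a := by
    intro a ha b hb hab
    have hsub : T.filter (fun j' => b ≤ j') ⊆ T.filter (fun j' => a ≤ j') := by
      intro x hx
      rcases Finset.mem_filter.1 hx with ⟨h1, h2⟩
      exact Finset.mem_filter.2 ⟨h1, le_trans (le_of_lt hab) h2⟩
    have hmemA : a ∈ T.filter (fun j' => a ≤ j') :=
      Finset.mem_filter.2 ⟨ha, le_refl a⟩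
    have hmemB : a ∉ T.filter (fun j' => b ≤ j') := fun h =>
      absurd (Finset.mem_filter.1 h).2 (not_le_of_gt hab)
    exact Finset.card_lt_card
      ((Finset.ssubset_iff_of_subset hsub).2 ⟨a, hmemA, hmemB⟩)
  have hFinj : ∀ a ∈ T, ∀ b ∈ T, F a = F b → a = b := by
    intro a ha b hb hab
    by_contra hne
    rcases lt_or_gt_of_ne hne with h1 | h1
    · exact absurd hab (hFanti a ha b hb h1).ne'
    · exact absurd hab (hFanti b hb a ha h1).ne
  have himg : T.image F = Finset.Icc 1 t := by
    apply Finset.eq_of_subset_of_card_le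
    · intro i hi
      obtain ⟨j, hj, rfl⟩ := Finset.mem_image.1 hi
      refine Finset.mem_Icc.2 ⟨?_, ?_⟩
      · refine Finset.card_pos.2 ⟨j, Finset.mem_filter.2 ⟨hj, le_refl j⟩⟩
      · exact le_trans (Finset.card_le_card (Finset.filter_subset _ _)) (le_of_eq ht.symm)
    · rw [Nat.card_Icc, Finset.card_image_of_injOn hFinj]
      omega
  have hgauss : (∑ j ∈ T, F j) * 2 = (t + 1) * t := by
    have h1 : ∑ i ∈ T.image F, i = ∑ j ∈ T, F j := Finset.sum_image hFinj
    rw [← h1, himg]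
    have hgs := Finset.sum_range_id_mul_two (t + 1)
    have he : Finset.range (t + 1) = insert 0 (Finset.Icc 1 t) := by
      ext i
      simp only [Finset.mem_range, Finset.mem_insert, Finset.mem_Icc]
      omega
    rw [he, Finset.sum_insert (by simp)] at hgs
    simpa using hgs
  have hquad : t * t ≤ 2 * n := by
    calc t * t ≤ (t + 1) * t := Nat.mul_le_mul_right t (Nat.le_succ t)
      _ = (∑ j ∈ T, F j) * 2 := hgauss.symm
      _ ≤ n * 2 := Nat.mul_le_mul_right 2 hsumF
      _ = 2 * n := Nat.mul_comm n 2
  -- conclude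
  apply Nat.le_floor
  have hq : (t : ℝ) * t ≤ 2 * n := by exact_mod_cast hquad
  have hs := Real.sq_sqrt (by positivity : (0:ℝ) ≤ n)
  have hsn := Real.sqrt_nonneg (n : ℝ)
  nlinarith [hq, hs, hsn, sq_nonneg ((t : ℝ) - Real.sqrt n)]
end

section
/- Fix an integer q ≥ 2, R, t ∈ ℕ, bijections π_1,…,π_t : [R] → [R], and labels ℓ, ℓ_1,…,ℓ_t ∈ [R] with π_i(ℓ_i) = ℓ for all i ∈ [t]. Consider the folded-dictator assignment that, for each i ∈ [t] and z ∈ Z_q^R, assigns to the variable ⟨i, z⟩ the unique λ ∈ Z_q with z_{ℓ_i} + λ = 0 in Z_q. Then: (a) for every x ∈ Z_q^R and S ⊆ [R], if ℓ ∉ S and x_ℓ ≠ 0, this assignment satisfies the Not-Equal constraint determined by (x, S), namely ⟨i, z − z_1·𝟙⟩ ≠ z_1 for all i ∈ [t] and all z ∈ Z_q^R with π_i^{-1}(z) ∈ C_{x,S}; (b) if m ∈ ℕ and x is chosen uniformly from Z_q^R and S = {i_1,…,i_m} with i_1,…,i_m chosen independently and uniformly from [R], the constraint determined by (x, S) is satisfied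 by this assignment with probability at least (1 − m/R)·(1 − 1/q). -/
open scoped BigOperators Classical

/-- Membership in the sub-cube `C_{x,S}`: `z_j = x_j` for all `j ∉ S`. -/
def cubeMem {R : ℕ} {Dom : Type} (x : Fin R → Dom) (S : Finset (Fin R))
    (z : Fin R → Dom) : Prop :=
  ∀ j ∉ S, z j = x j

/-- `π⁻¹(z) ∈ C_{x,S}`: there is `y ∈ C_{x,S}` with `π(y) = z`, where
`π(y) = (y_{π(1)}, …, y_{π(R)})`. -/
def preCubeMem {R : ℕ} {Dom : Type} (π : Equiv.Perm (Fin R)) (x : Fin R → Dom)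
    (S : Finset (Fin R)) (z : Fin R → Dom) : Prop :=
  ∃ y : Fin R → Dom, (∀ j, y (π j) = z j) ∧ cubeMem x S y

/-- The Not-Equal constraint determined by `(x, S)` (with respect to the bijections
`π_1, …, π_t`) is satisfied by the folded-dictator assignment
`⟨i, w⟩ ↦ (the unique λ with w_{ℓ_i} + λ = 0) = -w_{ℓ_i}` iff
`⟨i, z - z_1·𝟙⟩ ≠ z_1`, i.e. `-(z_{ℓ_i} - z_1) ≠ z_1`, for all `i ∈ [t]` and all
`z` with `π_i⁻¹(z) ∈ C_{x,S}`. -/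
def foldedDictatorSat {q R t : ℕ} (hR : 0 < R) (π : Fin t → Equiv.Perm (Fin R))
    (ℓv : Fin t → Fin R) (x : Fin R → ZMod q) (S : Finset (Fin R)) : Prop :=
  ∀ (i : Fin t) (z : Fin R → ZMod q), preCubeMem (π i) x S z →
    -(z (ℓv i) - z ⟨0, hR⟩) ≠ z ⟨0, hR⟩

/-- Completeness of the Not-Equal test for folded-dictator assignments: with
`π_i(ℓ_i) = ℓ` for all `i`, the folded-dictator assignment
`⟨i, w⟩ ↦ -w_{ℓ_i}` (a) satisfies the Not-Equal constraint determined by `(x, S)`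
whenever `ℓ ∉ S` and `x_ℓ ≠ 0`; and (b) satisfies the constraint determined by
uniformly random `(x, S)` (where `S` is the image of `m` independent uniform indices)
with probability at least `(1 - m/R)·(1 - 1/q)`. -/
theorem folded_dictator_completeness (q R t : ℕ) [NeZero q] (hq : 2 ≤ q) (hR : 0 < R)
    (π : Fin t → Equiv.Perm (Fin R)) (ℓ : Fin R) (ℓv : Fin t → Fin R)
    (hπ : ∀ i, π i (ℓv i) = ℓ) :
    (∀ (x : Fin R → ZMod q) (S : Finset (Fin R)), ℓ ∉ S → x ℓ ≠ 0 →
      foldedDictatorSat hR π ℓv x S) ∧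
    (∀ m : ℕ,
      (1 - (m : ℝ) / R) * (1 - 1 / q) * (q ^ R * R ^ m) ≤
        ((Finset.univ.filter fun p : (Fin R → ZMod q) × (Fin m → Fin R) =>
            foldedDictatorSat hR π ℓv p.1 (Finset.image p.2 Finset.univ)).card : ℝ)) := by
  have parta : ∀ (x : Fin R → ZMod q) (S : Finset (Fin R)), ℓ ∉ S → x ℓ ≠ 0 →
      foldedDictatorSat hR π ℓv x S := by
    intro x S hℓS hxℓ i z hz
    obtain ⟨y, hy, hcube⟩ := hz
    have h1 : z (ℓv i) = x ℓ := by
      rw [← hy (ℓv i), hπ i]; exact hcube ℓ hℓS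
    rw [h1]
    intro h
    exact hxℓ (by linear_combination -h)
  refine ⟨parta, fun m => ?_⟩
  have hq0 : (0:ℝ) < (q:ℝ) := by exact_mod_cast Nat.lt_of_lt_of_le two_pos hq
  have hR0 : (0:ℝ) < (R:ℝ) := by exact_mod_cast hR
  -- counting the "good" set
  have hX : (Finset.univ.filter fun x : Fin R → ZMod q => x ℓ ≠ 0).card
      = (q - 1) * q ^ (R - 1) := by
    have heq : (Finset.univ.filter fun x : Fin R → ZMod q => x ℓ ≠ 0)
        = Fintype.piFinset (fun j => if j = ℓ then
            Finset.univ.filter (fun a : ZMod q => a ≠ 0) else Finset.univ) := by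
      ext x
      simp only [Finset.mem_filter, Finset.mem_univ, true_and, Fintype.mem_piFinset]
      constructor
      · intro h j
        by_cases hj : j = ℓ <;> simp [hj, h]
      · intro h
        have := h ℓ
        simpa using this
    rw [heq, Fintype.card_piFinset]
    have hcard0 : (Finset.univ.filter (fun a : ZMod q => a ≠ 0)).card = q - 1 := by
      rw [Finset.filter_ne', Finset.card_erase_of_mem (Finset.mem_univ _),
        Finset.card_univ, ZMod.card]
    rw [← Finset.mul_prod_erase _ _ (Finset.mem_univ ℓ)]
    simp only [if_pos rfl, hcard0]
    congr 1
    rw [Finset.prod_congr rfl (fun j hj => by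
      rw [if_neg (Finset.ne_of_mem_erase hj)]), Finset.prod_const,
      Finset.card_univ, Finset.card_erase_of_mem (Finset.mem_univ _),
      Finset.card_univ, Fintype.card_fin]
    simp
  have hW : (Finset.univ.filter fun w : Fin m → Fin R => ∀ j, w j ≠ ℓ).card
      = (R - 1) ^ m := by
    have heq : (Finset.univ.filter fun w : Fin m → Fin R => ∀ j, w j ≠ ℓ)
        = Fintype.piFinset (fun _ => Finset.univ.filter (fun a : Fin R => a ≠ ℓ)) := by
      ext w
      simp [Fintype.mem_piFinset]
    rw [heq, Fintype.card_piFinset]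
    rw [Finset.prod_const, Finset.filter_ne', Finset.card_erase_of_mem (Finset.mem_univ _),
      Finset.card_univ, Fintype.card_fin, Finset.card_univ, Fintype.card_fin]
  -- the good set is contained in the filter
  have hsub : (Finset.univ.filter fun x : Fin R → ZMod q => x ℓ ≠ 0) ×ˢ
      (Finset.univ.filter fun w : Fin m → Fin R => ∀ j, w j ≠ ℓ) ⊆
      (Finset.univ.filter fun p : (Fin R → ZMod q) × (Fin m → Fin R) =>
        foldedDictatorSat hR π ℓv p.1 (Finset.image p.2 Finset.univ)) := by
    intro p hp
    rw [Finset.mem_product] at hp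
    obtain ⟨hp1, hp2⟩ := hp
    rw [Finset.mem_filter] at hp1 hp2 ⊢
    refine ⟨Finset.mem_univ _, parta _ _ ?_ hp1.2⟩
    intro hmem
    rw [Finset.mem_image] at hmem
    obtain ⟨j, _, hj⟩ := hmem
    exact hp2.2 j hj
  have hcard := Finset.card_le_card hsub
  rw [Finset.card_product, hX, hW] at hcard
  -- real arithmetic
  have hle : ((q - 1) * q ^ (R - 1) * (R - 1) ^ m : ℕ) ≤
      ((Finset.univ.filter fun p : (Fin R → ZMod q) × (Fin m → Fin R) =>
        foldedDictatorSat hR π ℓv p.1 (Finset.image p.2 Finset.univ)).card : ℝ) := by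
    exact_mod_cast hcard
  refine le_trans ?_ hle
  have hcast : (((q - 1) * q ^ (R - 1) * (R - 1) ^ m : ℕ) : ℝ)
      = ((q:ℝ) - 1) * (q:ℝ) ^ (R - 1) * ((R:ℝ) - 1) ^ m := by
    rw [Nat.cast_mul, Nat.cast_mul, Nat.cast_pow, Nat.cast_pow,
      Nat.cast_sub (le_trans one_le_two hq), Nat.cast_sub hR, Nat.cast_one]
  rw [hcast]
  have hqR : ((1:ℝ) - 1/q) * (q:ℝ) ^ R = ((q:ℝ) - 1) * (q:ℝ) ^ (R - 1) := by
    have hpow : (q:ℝ) ^ R = (q:ℝ) * (q:ℝ) ^ (R - 1) := by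
      nth_rewrite 1 [(Nat.succ_pred_eq_of_pos hR).symm]
      rw [pow_succ, Nat.pred_eq_sub_one]
      ring
    rw [hpow]
    field_simp
  have hbern : (1:ℝ) - (m:ℝ)/R ≤ ((1:ℝ) - 1/R) ^ m := by
    have h := one_add_mul_le_pow (a := -(1/(R:ℝ)))
      (by
        have h1 : 1/(R:ℝ) ≤ 1 := by
          rw [div_le_one hR0]; exact_mod_cast hR
        linarith) m
    have : (1:ℝ) + (m:ℝ) * (-(1/(R:ℝ))) = 1 - (m:ℝ)/R := by ring
    rw [this] at h
    simpa [sub_eq_add_neg] using h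
  have hRm : ((1:ℝ) - 1/R) ^ m * (R:ℝ) ^ m = ((R:ℝ) - 1) ^ m := by
    rw [← mul_pow]
    congr 1
    field_simp
  calc (1 - (m:ℝ)/R) * (1 - 1/q) * ((q:ℝ) ^ R * (R:ℝ) ^ m)
      = ((1 - (m:ℝ)/R) * (R:ℝ) ^ m) * ((1 - 1/(q:ℝ)) * (q:ℝ) ^ R) := by ring
    _ ≤ (((1:ℝ) - 1/R) ^ m * (R:ℝ) ^ m) * ((1 - 1/(q:ℝ)) * (q:ℝ) ^ R) := by
        apply mul_le_mul_of_nonneg_right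
        · exact mul_le_mul_of_nonneg_right hbern (by positivity)
        · have h1 : (0:ℝ) ≤ 1 - 1/(q:ℝ) := by
            rw [sub_nonneg]
            rw [div_le_one hq0]
            exact_mod_cast Nat.one_le_of_lt hq
          positivity
    _ = ((q:ℝ) - 1) * (q:ℝ) ^ (R - 1) * ((R:ℝ) - 1) ^ m := by
        rw [hqR, hRm]; ring
end

section
/- Fix n, k ∈ ℕ with k ≤ n, and let P = {C_1,…,C_m} be a 1F-CSP instance of arity k over boolean variables x_1,…,x_n. Let H(P) be its FGLSS graph. Then: (i) for every x ∈ {0,1}^n, the set U(x) := {(C, α) : C ∈ P, α a satisfying partial assignment of C, and x does not extend α} is a vertex cover of H(P), and the fraction Val(x) of constraints of P satisfied by x equals 2 − |U(x)|/m; (ii) for every vertex cover U of H(P) there exists x ∈ {0,1}^n with U(x) ⊆ U; consequently, the minimum size of a vertex cover of H(P) equals m·(2 − OPT(P)), where OPT(P) := max_{x ∈ {0,1}^n} Val(x). -/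
open scoped BigOperators Classical

/-- A constraint of a binary CSP over `n` boolean variables: a support set
`supp ⊆ [n]` together with the set `sat` of satisfying partial assignments. -/
structure BCons (n : ℕ) where
  supp : Finset (Fin n)
  sat : Finset ({i // i ∈ supp} → Bool)

/-- An assignment `x ∈ {0,1}^n` satisfies the constraint `C` iff its restriction
to the support of `C` is an accepting configuration. -/
def BCons.SatBy {n : ℕ} (C : BCons n) (x : Fin n → Bool) : Prop :=
  (fun i : {i // i ∈ C.supp} => x i.1) ∈ C.sat

/-- The vertices of the FGLSS graph of the instance `C`: pairs of a constraint and one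
of its satisfying partial assignments. -/
abbrev FGLSSVert {n m : ℕ} (C : Fin m → BCons n) : Type :=
  (i : Fin m) × {α : {j // j ∈ (C i).supp} → Bool // α ∈ (C i).sat}

/-- Two vertices of the FGLSS graph are adjacent iff their partial assignments are
incompatible: some common variable receives different values. -/
def FGLSSIncomp {n m : ℕ} (C : Fin m → BCons n) (p p' : FGLSSVert C) : Prop :=
  ∃ (v : Fin n) (h : v ∈ (C p.1).supp) (h' : v ∈ (C p'.1).supp),
    p.2.1 ⟨v, h⟩ ≠ p'.2.1 ⟨v, h'⟩

/-- The FGLSS graph of the instance `C`. -/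
def FGLSSGraph {n m : ℕ} (C : Fin m → BCons n) : SimpleGraph (FGLSSVert C) where
  Adj := FGLSSIncomp C
  symm := by
    constructor
    rintro p p' ⟨v, h, h', hne⟩
    exact ⟨v, h', h, fun e => hne e.symm⟩
  loopless := by
    constructor
    rintro p ⟨v, h, h', hne⟩
    exact hne rfl

/-- `U` is a vertex cover of the FGLSS graph. -/
def FGLSSIsVC {n m : ℕ} (C : Fin m → BCons n) (U : Finset (FGLSSVert C)) : Prop :=
  ∀ p p' : FGLSSVert C, (FGLSSGraph C).Adj p p' → p ∈ U ∨ p' ∈ U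

/-- `U(x)`: the set of vertices `(C, α)` whose partial assignment `α` is not extended
by the total assignment `x`. -/
noncomputable def FGLSScoverOf {n m : ℕ} (C : Fin m → BCons n) (x : Fin n → Bool) :
    Finset (FGLSSVert C) :=
  Finset.univ.filter fun p => ¬ ∀ i : {j // j ∈ (C p.1).supp}, x i.1 = p.2.1 i

/-- `OPT(P)`: the maximum over assignments of the fraction of satisfied constraints. -/
noncomputable def FGLSSopt {n m : ℕ} [NeZero m] (C : Fin m → BCons n) : ℝ :=
  Finset.univ.sup' Finset.univ_nonempty
    (fun x : Fin n → Bool =>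
      ((Finset.univ.filter fun i => (C i).SatBy x).card : ℝ) / m)

/-! Each constraint contributes exactly two vertices, and `x` extends at most one of them,
namely its restriction to the support when `x` satisfies the constraint; hence
`|U(x)| = 2m - #{satisfied constraints}`. Conversely, the vertices outside a vertex cover are
pairwise compatible, so their partial assignments glue to a total assignment `x` with
`U(x) ⊆ U`. -/

open Finset

section FGLSS

variable {n m : ℕ} (C : Fin m → BCons n)

theorem mem_FGLSScoverOf {x : Fin n → Bool} {p : FGLSSVert C} :
    p ∈ FGLSScoverOf C x ↔ (fun j : {j // j ∈ (C p.1).supp} => x j.1) ≠ p.2.1 := by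
  simp [FGLSScoverOf, funext_iff]

theorem FGLSSIsVC_FGLSScoverOf (x : Fin n → Bool) : FGLSSIsVC C (FGLSScoverOf C x) := by
  rintro p p' ⟨v, h, h', hne⟩
  by_contra! hcov
  simp only [mem_FGLSScoverOf, ne_eq, not_not, funext_iff] at hcov
  exact hne ((hcov.1 ⟨v, h⟩).symm.trans (hcov.2 ⟨v, h'⟩))

theorem exists_FGLSScoverOf_subset {U : Finset (FGLSSVert C)} (hU : FGLSSIsVC C U) :
    ∃ x, FGLSScoverOf C x ⊆ U := by
  refine ⟨fun v => decide (∃ q : FGLSSVert C, q ∉ U ∧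
    ∃ h : v ∈ (C q.1).supp, q.2.1 ⟨v, h⟩ = true), fun p hp => ?_⟩
  by_contra hpU
  refine mem_FGLSScoverOf C |>.mp hp (funext fun j => ?_)
  cases hpj : p.2.1 j with
  | true => exact decide_eq_true ⟨p, hpU, j.2, hpj⟩
  | false =>
    refine decide_eq_false fun ⟨q, hqU, hq, hqj⟩ => ?_
    have hadj : (FGLSSGraph C).Adj p q := ⟨j.1, j.2, hq, by simp [hpj, hqj]⟩
    exact (hU p q hadj).elim hpU hqU

theorem card_compl_FGLSScoverOf (x : Fin n → Bool) :
    #(FGLSScoverOf C x)ᶜ = #(univ.filter fun i => (C i).SatBy x) := by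
  refine card_bij (fun p _ => p.1) (fun p hp => ?_) (fun p hp q hq hpq => ?_) (fun i hi => ?_)
  · rw [mem_compl, mem_FGLSScoverOf, not_not] at hp
    exact mem_filter.mpr ⟨mem_univ _, by rw [BCons.SatBy, hp]; exact p.2.2⟩
  · rw [mem_compl, mem_FGLSScoverOf, not_not] at hp hq
    obtain ⟨i, α, hα⟩ := p
    obtain ⟨i', α', hα'⟩ := q
    obtain rfl : i = i' := hpq
    obtain rfl : α = α' := hp.symm.trans hq
    rfl
  · refine ⟨⟨i, _, (mem_filter.mp hi).2⟩, ?_, rfl⟩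
    simp [mem_FGLSScoverOf]

theorem card_FGLSSVert (h1f : ∀ i, (C i).sat.card = 2) :
    Fintype.card (FGLSSVert C) = 2 * m := by
  simp [Fintype.card_sigma, h1f, mul_comm]

theorem card_FGLSScoverOf_add_card_filter_satBy (h1f : ∀ i, (C i).sat.card = 2)
    (x : Fin n → Bool) :
    #(FGLSScoverOf C x) + #(univ.filter fun i => (C i).SatBy x) = 2 * m := by
  rw [← card_compl_FGLSScoverOf, card_add_card_compl, card_FGLSSVert C h1f]

theorem FGLSSopt_eq_of_forall_card_le [NeZero m] {x₀ : Fin n → Bool}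
    (hx₀ : ∀ x, #(univ.filter fun i => (C i).SatBy x) ≤
      #(univ.filter fun i => (C i).SatBy x₀)) :
    FGLSSopt C = (#(univ.filter fun i => (C i).SatBy x₀) : ℝ) / m := by
  refine le_antisymm (sup'_le _ _ fun x _ => ?_) ?_
  · exact div_le_div_of_nonneg_right (mod_cast hx₀ x) m.cast_nonneg
  · exact le_sup' (fun x => (#(univ.filter fun i => (C i).SatBy x) : ℝ) / m) (mem_univ x₀)

end FGLSS

theorem fglss_reduction_general (n m : ℕ) [NeZero m] (C : Fin m → BCons n)
    (h1f : ∀ i, (C i).sat.card = 2) :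
    (∀ x : Fin n → Bool,
      FGLSSIsVC C (FGLSScoverOf C x) ∧
      ((Finset.univ.filter fun i => (C i).SatBy x).card : ℝ) / m =
        2 - ((FGLSScoverOf C x).card : ℝ) / m) ∧
    (∀ U : Finset (FGLSSVert C), FGLSSIsVC C U → ∃ x, FGLSScoverOf C x ⊆ U) ∧
    (∃ U : Finset (FGLSSVert C), FGLSSIsVC C U ∧
      (U.card : ℝ) = m * (2 - FGLSSopt C) ∧
      ∀ U' : Finset (FGLSSVert C), FGLSSIsVC C U' → U.card ≤ U'.card) := by
  have hm : (m : ℝ) ≠ 0 := Nat.cast_ne_zero.mpr (NeZero.ne m)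
  have hcount (x : Fin n → Bool) :
      (#(FGLSScoverOf C x) : ℝ) + #(univ.filter fun i => (C i).SatBy x) = 2 * m := by
    exact_mod_cast card_FGLSScoverOf_add_card_filter_satBy C h1f x
  obtain ⟨x₀, -, hx₀⟩ := exists_max_image univ
    (fun x => #(univ.filter fun i => (C i).SatBy x)) univ_nonempty
  refine ⟨fun x => ⟨FGLSSIsVC_FGLSScoverOf C x, ?_⟩, fun U => exists_FGLSScoverOf_subset C,
    FGLSScoverOf C x₀, FGLSSIsVC_FGLSScoverOf C x₀, ?_, fun U' hU' => ?_⟩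
  · field_simp
    linarith [hcount x]
  · rw [FGLSSopt_eq_of_forall_card_le C fun x => hx₀ x (mem_univ x)]
    field_simp
    linarith [hcount x₀]
  · obtain ⟨x, hx⟩ := exists_FGLSScoverOf_subset C hU'
    have hcover_le := card_le_card hx
    have hsat_le := hx₀ x (mem_univ x)
    have hx := card_FGLSScoverOf_add_card_filter_satBy C h1f x
    have hx₀ := card_FGLSScoverOf_add_card_filter_satBy C h1f x₀
    omega

/-- FGLSS reduction from a `1F-CSP` instance `P` (with `m ≥ 1` constraints of arity
`k ≤ n`, each with exactly two accepting configurations) to vertex cover: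
(i) for every assignment `x`, `U(x)` is a vertex cover of the FGLSS graph and
`Val(x) = 2 - |U(x)|/m`; (ii) every vertex cover contains some `U(x)`; consequently,
the minimum size of a vertex cover equals `m·(2 - OPT(P))`. -/
theorem fglss_reduction (n m k : ℕ) [NeZero m] (hkn : k ≤ n) (C : Fin m → BCons n)
    (harity : ∀ i, (C i).supp.card = k) (h1f : ∀ i, (C i).sat.card = 2) :
    (∀ x : Fin n → Bool,
      FGLSSIsVC C (FGLSScoverOf C x) ∧
      ((Finset.univ.filter fun i => (C i).SatBy x).card : ℝ) / m =
        2 - ((FGLSScoverOf C x).card : ℝ) / m) ∧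
    (∀ U : Finset (FGLSSVert C), FGLSSIsVC C U → ∃ x, FGLSScoverOf C x ⊆ U) ∧
    (∃ U : Finset (FGLSSVert C), FGLSSIsVC C U ∧
      (U.card : ℝ) = m * (2 - FGLSSopt C) ∧
      ∀ U' : Finset (FGLSSVert C), FGLSSIsVC C U' → U.card ≤ U'.card) :=
  fglss_reduction_general n m C h1f
end

section
/- Let 𝓤 = (G, [R], Π) be a unique games instance on a graph G = (V, E), and let 𝓤' be the unique games instance on the bipartite double cover G' = (V₁, V₂, E'), where V₁ and V₂ are two copies of V, each edge uv ∈ E gives rise to the two edges u₁v₂ and u₂v₁ of E', and both carry the same bijection π_{u,v} (with the corresponding inverses in the reverse direction). If there exists a labeling Λ' : V₁ ∪ V₂ → [R] satisfying at least a δ fraction of the edges of G', then there exists a labeling Λ : V → [R] satisfying at least a δ/4 fraction of the edges of G. -/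
/-!
Choose `f : V → Bool` uniformly at random and label `w` by `Λ'(w₁)` if `f w` and by `Λ'(w₂)`
otherwise. A satisfied cover edge `u₁v₂` (with `u ≠ v`) stays satisfied whenever `f u = true`
and `f v = false`, which holds for exactly a quarter of all `f`; so on average, and hence for
some `f`, a quarter of the satisfied cover edges survive.
-/

open scoped BigOperators Classical

open Finset Function

section Counting

variable {ι β : Type*} [Fintype ι] [Fintype β] [DecidableEq β]

theorem card_filter_apply_eq_and_apply_eq_mul {i j : ι} (hij : i ≠ j) (a b : β) :
    #{f : ι → β | f i = a ∧ f j = b} * Fintype.card β ^ 2 = Fintype.card β ^ Fintype.card ι := by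
  have hfilter : ({f : ι → β | f i = a ∧ f j = b} : Finset _) =
      Fintype.piFinset (update (update (fun _ => (univ : Finset β)) i {a}) j {b}) := by
    ext f
    simp only [mem_filter, mem_univ, true_and, Fintype.mem_piFinset]
    constructor
    · rintro ⟨rfl, rfl⟩ k
      rcases eq_or_ne k j with rfl | hkj
      · simp
      rcases eq_or_ne k i with rfl | hki <;> simp [*]
    · intro h
      exact ⟨by simpa [hij] using h i, by simpa using h j⟩
  have hcard : ∀ k, #(update (update (fun _ => (univ : Finset β)) i {a}) j {b} k) =
      update (update (fun _ => Fintype.card β) i 1) j 1 k := by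
    intro k
    rcases eq_or_ne k j with rfl | hkj
    · simp
    rcases eq_or_ne k i with rfl | hki <;> simp [*]
  rw [hfilter, Fintype.card_piFinset, Fintype.prod_congr _ _ hcard,
    prod_update_of_mem (mem_univ j), prod_update_of_mem (by simpa using hij), one_mul, one_mul,
    prod_const, ← pow_add]
  congr 1
  have hi : i ∈ univ \ {j} := by simpa using hij
  rw [card_sdiff_of_subset (singleton_subset_iff.2 hi), card_sdiff_of_subset (subset_univ _),
    card_singleton, card_singleton, card_univ]
  have : 1 < Fintype.card ι := Fintype.one_lt_card_iff.2 ⟨i, j, hij⟩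
  omega

theorem sum_card_filter_apply_eq_and_apply_eq_mul (S : Finset (ι × ι))
    (hS : ∀ p ∈ S, p.1 ≠ p.2) (a b : β) :
    (∑ f : ι → β, #{p ∈ S | f p.1 = a ∧ f p.2 = b}) * Fintype.card β ^ 2 =
      #S * Fintype.card β ^ Fintype.card ι := by
  have hswap := sum_card_bipartiteAbove_eq_sum_card_bipartiteBelow (s := univ) (t := S)
    (r := fun (f : ι → β) (p : ι × ι) => f p.1 = a ∧ f p.2 = b)
  simp only [bipartiteAbove, bipartiteBelow] at hswap
  rw [hswap, sum_mul, ← smul_eq_mul, ← sum_const]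
  exact sum_congr rfl fun p hp => card_filter_apply_eq_and_apply_eq_mul (hS p hp) a b

end Counting

variable {V α : Type*}

def labelingOfDoubleCover (Λ' : V ⊕ V → α) (f : V → Bool) : V → α :=
  fun w => Λ' (if f w then .inl w else .inr w)

theorem exists_labeling_card_le_four_mul [Fintype V] (c : V × V → α → α → Prop)
    [∀ p x y, Decidable (c p x y)]
    (Λ' : V ⊕ V → α) (S : Finset (V × V))
    (hS : ∀ p ∈ S, p.1 ≠ p.2 ∧ c p (Λ' (.inl p.1)) (Λ' (.inr p.2))) :
    ∃ Λ : V → α, #S ≤ 4 * #{p ∈ S | c p (Λ p.1) (Λ p.2)} := by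
  have hcount := sum_card_filter_apply_eq_and_apply_eq_mul S (fun p hp => (hS p hp).1) true false
  have hsat : ∀ f : V → Bool, #{p ∈ S | f p.1 = true ∧ f p.2 = false} ≤
      #{p ∈ S | c p (labelingOfDoubleCover Λ' f p.1) (labelingOfDoubleCover Λ' f p.2)} := by
    refine fun f => card_le_card (monotone_filter_right _ fun p hp ⟨h₁, h₂⟩ => ?_)
    simpa [labelingOfDoubleCover, h₁, h₂] using (hS p hp).2
  have hsum : ∑ _ : V → Bool, #S ≤
      ∑ f : V → Bool, 4 * #{p ∈ S | c p (labelingOfDoubleCover Λ' f p.1)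
        (labelingOfDoubleCover Λ' f p.2)} :=
    calc ∑ _ : V → Bool, #S = #S * 2 ^ Fintype.card V := by simp [mul_comm]
      _ = ∑ f : V → Bool, 4 * #{p ∈ S | f p.1 = true ∧ f p.2 = false} := by
          rw [Fintype.card_bool] at hcount
          rw [← mul_sum]; linarith
      _ ≤ _ := sum_le_sum fun f _ => Nat.mul_le_mul_left 4 (hsat f)
  obtain ⟨f, -, hf⟩ := exists_le_of_sum_le univ_nonempty hsum
  exact ⟨_, hf⟩

theorem double_cover_labeling_general {V : Type} [Fintype V] (R : ℕ) (G : SimpleGraph V)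
    (π : V → V → Equiv.Perm (Fin R))
    (δ : ℝ) (Λ' : V ⊕ V → Fin R)
    (hΛ' : δ * ((Finset.univ.filter fun p : V × V => G.Adj p.1 p.2).card : ℝ) ≤
      ((Finset.univ.filter fun p : V × V =>
          G.Adj p.1 p.2 ∧ π p.1 p.2 (Λ' (Sum.inl p.1)) = Λ' (Sum.inr p.2)).card : ℝ)) :
    ∃ Λ : V → Fin R,
      δ / 4 * ((Finset.univ.filter fun p : V × V => G.Adj p.1 p.2).card : ℝ) ≤
        ((Finset.univ.filter fun p : V × V =>
            G.Adj p.1 p.2 ∧ π p.1 p.2 (Λ p.1) = Λ p.2).card : ℝ) := by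
  obtain ⟨Λ, hΛ⟩ := exists_labeling_card_le_four_mul
    (fun p x y => π p.1 p.2 x = y) Λ'
    {p : V × V | G.Adj p.1 p.2 ∧ π p.1 p.2 (Λ' (.inl p.1)) = Λ' (.inr p.2)}
    (fun p hp => by
      rw [mem_filter] at hp
      exact ⟨G.ne_of_adj hp.2.1, hp.2.2⟩)
  have hsub : #{p ∈ {p : V × V | G.Adj p.1 p.2 ∧ π p.1 p.2 (Λ' (.inl p.1)) = Λ' (.inr p.2)} |
      π p.1 p.2 (Λ p.1) = Λ p.2} ≤ #{p : V × V | G.Adj p.1 p.2 ∧ π p.1 p.2 (Λ p.1) = Λ p.2} :=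
    card_le_card fun p hp => by simp_all
  have hcast := (Nat.cast_le (α := ℝ)).2 (hΛ.trans (Nat.mul_le_mul_left 4 hsub))
  push_cast at hcast
  exact ⟨Λ, by linarith⟩

/-- Unique games on a bipartite double cover: let `𝓤` be a unique games instance on a
graph `G = (V,E)` with bijections `π_{u,v}` (satisfying `π_{v,u} = π_{u,v}⁻¹`), and let
`𝓤'` be the instance on the bipartite double cover `G' = (V₁, V₂, E')`, where each edge
`uv ∈ E` gives rise to the edges `u₁v₂` and `u₂v₁`, both carrying `π_{u,v}`. Here edges
are counted by ordered adjacent pairs `(u,v)` of `G`, the pair `(u,v)` corresponding to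
the edge `u₁v₂` of `G'`. If some labeling `Λ'` of `V₁ ∪ V₂` satisfies at least a `δ`
fraction of the edges of `G'`, then some labeling `Λ` of `V` satisfies at least a `δ/4`
fraction of the edges of `G`. -/
theorem double_cover_labeling {V : Type} [Fintype V] (R : ℕ) (G : SimpleGraph V)
    (π : V → V → Equiv.Perm (Fin R))
    (hπ : ∀ u v : V, π v u = (π u v).symm)
    (δ : ℝ) (Λ' : V ⊕ V → Fin R)
    (hΛ' : δ * ((Finset.univ.filter fun p : V × V => G.Adj p.1 p.2).card : ℝ) ≤
      ((Finset.univ.filter fun p : V × V =>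
          G.Adj p.1 p.2 ∧ π p.1 p.2 (Λ' (Sum.inl p.1)) = Λ' (Sum.inr p.2)).card : ℝ)) :
    ∃ Λ : V → Fin R,
      δ / 4 * ((Finset.univ.filter fun p : V × V => G.Adj p.1 p.2).card : ℝ) ≤
        ((Finset.univ.filter fun p : V × V =>
            G.Adj p.1 p.2 ∧ π p.1 p.2 (Λ p.1) = Λ p.2).card : ℝ) :=
  double_cover_labeling_general R G π δ Λ' hΛ'
end
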